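/- arXiv:1501.04758 — 3 statements merged into one kernel-verified Lean document; each statement's English description precedes it below -/
import Mathlib

section
/- Let S = (S_t)_{t≥0} be a subordinator with Laplace exponent φ, i.e., E[e^{-λ S_t}] = e^{-t φ(λ)}, and suppose φ(λ) ≥ C λ^{α/2} for all λ ≥ 1, for some α ∈ (0,2) and C > 0. Then for every p ∈ (0,1) there is a constant C' (which can be chosen uniformly in p on compact subsets of (0,1)) such that E[S_t^{-p}] ≤ C' t^{-2p/α} for all t ∈ (0,1]. -/
/-!
Integrating `Γ(p) x^{-p} = ∫₀^∞ λ^{p-1} e^{-λx} dλ` against the law of `S_t` and swapping the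
integrals (Tonelli) gives `Γ(p) E[S_t^{-p}] = ∫₀^∞ λ^{p-1} E[e^{-λ S_t}] dλ`. On `λ ≤ 1` the
Laplace transform is at most `1`, contributing `1/p`; on `λ ≥ 1` it is at most
`exp(-t C λ^{α/2})`, whose weighted integral is `(tC)^{-2p/α} (2/α) Γ(2p/α)` after the substitution
`u = λ^{α/2}`. As `t ≤ 1`, both terms are bounded by a multiple of `t^{-2p/α}` whose coefficient
is continuous in `p > 0`, hence bounded on `[a, b]`.
-/

open MeasureTheory Set Real

lemma lintegral_Ioi_rpow_mul_exp_neg_mul_rpow {q β b : ℝ} (hq : -1 < q) (hβ : 0 < β)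
    (hb : 0 < b) :
    ∫⁻ x in Ioi 0, ENNReal.ofReal (x ^ q * exp (-b * x ^ β))
      = ENNReal.ofReal (b ^ (-(q + 1) / β) * (1 / β) * Gamma ((q + 1) / β)) := by
  rw [← ofReal_integral_eq_lintegral_ofReal (integrableOn_rpow_mul_exp_neg_mul_rpow hq hβ hb),
    integral_rpow_mul_exp_neg_mul_rpow hβ hq hb]
  filter_upwards [self_mem_ae_restrict measurableSet_Ioi] with x (hx : 0 < x)
  positivity

lemma lintegral_Ioi_rpow_sub_one_mul_exp_neg_mul {p x : ℝ} (hp : 0 < p) (hx : 0 < x) :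
    ∫⁻ l in Ioi (0 : ℝ), ENNReal.ofReal (l ^ (p - 1) * exp (-l * x))
      = ENNReal.ofReal (Gamma p * x ^ (-p)) := by
  have h := lintegral_Ioi_rpow_mul_exp_neg_mul_rpow (by linarith : -1 < p - 1) one_pos hx
  simp only [rpow_one, sub_add_cancel, div_one, mul_one] at h
  simp_rw [show ∀ l, -l * x = -x * l from fun l => by ring, h, mul_comm]

lemma lintegral_Ioc_zero_one_rpow_sub_one {p : ℝ} (hp : 0 < p) :
    ∫⁻ l in Ioc 0 1, ENNReal.ofReal (l ^ (p - 1)) = ENNReal.ofReal (1 / p) := by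
  have hint : IntegrableOn (fun l : ℝ => l ^ (p - 1)) (Ioc 0 1) := by
    rw [← intervalIntegrable_iff_integrableOn_Ioc_of_le zero_le_one]
    exact intervalIntegral.intervalIntegrable_rpow' (by linarith)
  rw [← ofReal_integral_eq_lintegral_ofReal hint, ← intervalIntegral.integral_of_le zero_le_one,
    integral_rpow (Or.inl (by linarith)), sub_add_cancel, one_rpow, zero_rpow hp.ne']
  · simp
  · filter_upwards [self_mem_ae_restrict measurableSet_Ioc] with l hl
    exact rpow_nonneg hl.1.le _

section NegativeMoments

variable {Ω : Type*} [MeasurableSpace Ω] {X : Ω → ℝ}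

lemma ofReal_Gamma_mul_lintegral_rpow_neg (μ : Measure Ω) [SFinite μ] (hX : Measurable X)
    (hpos : ∀ᵐ ω ∂μ, 0 < X ω) {p : ℝ} (hp : 0 < p) :
    ENNReal.ofReal (Gamma p) * ∫⁻ ω, ENNReal.ofReal (X ω ^ (-p)) ∂μ
      = ∫⁻ l in Ioi (0 : ℝ),
          ENNReal.ofReal (l ^ (p - 1)) * ∫⁻ ω, ENNReal.ofReal (exp (-l * X ω)) ∂μ := by
  calc ENNReal.ofReal (Gamma p) * ∫⁻ ω, ENNReal.ofReal (X ω ^ (-p)) ∂μ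
      = ∫⁻ ω, (∫⁻ l in Ioi (0 : ℝ), ENNReal.ofReal (l ^ (p - 1) * exp (-l * X ω))) ∂μ := by
        rw [← lintegral_const_mul' _ _ ENNReal.ofReal_ne_top]
        refine lintegral_congr_ae ?_
        filter_upwards [hpos] with ω hω
        rw [lintegral_Ioi_rpow_sub_one_mul_exp_neg_mul hp hω,
          ENNReal.ofReal_mul (Gamma_nonneg_of_nonneg hp.le)]
    _ = ∫⁻ l in Ioi (0 : ℝ), ∫⁻ ω, ENNReal.ofReal (l ^ (p - 1) * exp (-l * X ω)) ∂μ :=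
        lintegral_lintegral_swap (by fun_prop : Measurable fun z : Ω × ℝ =>
          ENNReal.ofReal (z.2 ^ (p - 1) * exp (-z.2 * X z.1))).aemeasurable
    _ = _ := by
        refine setLIntegral_congr_fun measurableSet_Ioi fun l (hl : 0 < l) => ?_
        simp_rw [ENNReal.ofReal_mul (rpow_nonneg hl.le _)]
        exact lintegral_const_mul' _ _ ENNReal.ofReal_ne_top

lemma ofReal_Gamma_mul_lintegral_rpow_neg_le (P : Measure Ω) [IsProbabilityMeasure P]
    (hX : Measurable X) (hpos : ∀ᵐ ω ∂P, 0 < X ω) {p : ℝ} (hp : 0 < p) :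
    ENNReal.ofReal (Gamma p) * ∫⁻ ω, ENNReal.ofReal (X ω ^ (-p)) ∂P
      ≤ ENNReal.ofReal (1 / p) + ∫⁻ l in Ioi (1 : ℝ),
          ENNReal.ofReal (l ^ (p - 1)) * ∫⁻ ω, ENNReal.ofReal (exp (-l * X ω)) ∂P := by
  rw [ofReal_Gamma_mul_lintegral_rpow_neg P hX hpos hp, ← Ioc_union_Ioi_eq_Ioi zero_le_one,
    lintegral_union measurableSet_Ioi (Ioc_disjoint_Ioi le_rfl),
    ← lintegral_Ioc_zero_one_rpow_sub_one hp]
  refine add_le_add (setLIntegral_mono' measurableSet_Ioc fun l hl => ?_) le_rfl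
  calc ENNReal.ofReal (l ^ (p - 1)) * ∫⁻ ω, ENNReal.ofReal (exp (-l * X ω)) ∂P
      ≤ ENNReal.ofReal (l ^ (p - 1)) * ∫⁻ _, 1 ∂P := by
        gcongr ENNReal.ofReal (l ^ (p - 1)) * ?_
        refine lintegral_mono_ae ?_
        filter_upwards [hpos] with ω hω
        exact ENNReal.ofReal_le_one.2 (exp_le_one_iff.2 (by nlinarith [hl.1]))
    _ = ENNReal.ofReal (l ^ (p - 1)) := by simp

lemma integrable_exp_neg_mul (P : Measure Ω) [IsFiniteMeasure P] (hX : Measurable X)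
    (hnonneg : ∀ᵐ ω ∂P, 0 ≤ X ω) {l : ℝ} (hl : 0 ≤ l) :
    Integrable (fun ω => exp (-l * X ω)) P := by
  refine Integrable.of_bound (by fun_prop : Measurable fun ω => exp (-l * X ω)).aestronglyMeasurable
    1 ?_
  filter_upwards [hnonneg] with ω hω
  rw [norm_of_nonneg (exp_nonneg _), exp_le_one_iff]
  nlinarith

/-- The two summands bound the integrals over `λ ≤ 1` and `λ ≥ 1` in
`Γ(p) E[X^{-p}] = ∫₀^∞ λ^{p-1} E[e^{-λX}] dλ`. -/
noncomputable def negMomentConst (b β p : ℝ) : ℝ :=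
  (1 / p + b ^ (-p / β) * (1 / β) * Gamma (p / β)) / Gamma p

lemma lintegral_rpow_neg_le_negMomentConst (P : Measure Ω) [IsProbabilityMeasure P]
    (hX : Measurable X) (hpos : ∀ᵐ ω ∂P, 0 < X ω) {b β p : ℝ} (hb : 0 < b) (hβ : 0 < β)
    (hp : 0 < p) (hdecay : ∀ l, 1 ≤ l → ∫ ω, exp (-l * X ω) ∂P ≤ exp (-b * l ^ β)) :
    ∫⁻ ω, ENNReal.ofReal (X ω ^ (-p)) ∂P ≤ ENNReal.ofReal (negMomentConst b β p) := by
  have htail : ∫⁻ l in Ioi (1 : ℝ),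
        ENNReal.ofReal (l ^ (p - 1)) * ∫⁻ ω, ENNReal.ofReal (exp (-l * X ω)) ∂P
      ≤ ENNReal.ofReal (b ^ (-p / β) * (1 / β) * Gamma (p / β)) :=
    calc _ ≤ ∫⁻ l in Ioi (1 : ℝ), ENNReal.ofReal (l ^ (p - 1) * exp (-b * l ^ β)) := by
          refine setLIntegral_mono' measurableSet_Ioi fun l (hl : 1 < l) => ?_
          have hl0 : 0 ≤ l ^ (p - 1) := rpow_nonneg (by linarith) _
          have hint := integrable_exp_neg_mul P hX (hpos.mono fun _ => le_of_lt)
            (by linarith : 0 ≤ l)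
          rw [← ofReal_integral_eq_lintegral_ofReal hint (.of_forall fun _ => exp_nonneg _),
            ← ENNReal.ofReal_mul hl0]
          exact ENNReal.ofReal_le_ofReal (mul_le_mul_of_nonneg_left (hdecay l hl.le) hl0)
      _ ≤ ∫⁻ l in Ioi (0 : ℝ), ENNReal.ofReal (l ^ (p - 1) * exp (-b * l ^ β)) :=
          lintegral_mono_set (Ioi_subset_Ioi zero_le_one)
      _ = _ := by
          rw [lintegral_Ioi_rpow_mul_exp_neg_mul_rpow (by linarith) hβ hb, sub_add_cancel]
  have hΓ : 0 < Gamma p := Gamma_pos_of_pos hp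
  rw [negMomentConst, ENNReal.ofReal_div_of_pos hΓ,
    ENNReal.le_div_iff_mul_le (.inl (ENNReal.ofReal_pos.2 hΓ).ne') (.inl ENNReal.ofReal_ne_top),
    mul_comm, ENNReal.ofReal_add (by positivity) (by positivity)]
  exact (ofReal_Gamma_mul_lintegral_rpow_neg_le P hX hpos hp).trans (add_le_add le_rfl htail)

end NegativeMoments

lemma negMomentConst_pos {b β p : ℝ} (hb : 0 < b) (hβ : 0 < β) (hp : 0 < p) :
    0 < negMomentConst b β p := by
  unfold negMomentConst
  have : 0 < p / β := div_pos hp hβ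
  positivity

lemma continuousOn_negMomentConst {b β : ℝ} (hb : 0 < b) (hβ : 0 < β) :
    ContinuousOn (negMomentConst b β) (Ioi 0) := by
  have hΓ := differentiableOn_Gamma_Ioi.continuousOn
  refine ContinuousOn.div (ContinuousOn.add ?_ (ContinuousOn.mul ?_ ?_)) hΓ
    fun p (hp : 0 < p) => (Gamma_pos_of_pos hp).ne'
  · exact continuousOn_const.div continuousOn_id fun p (hp : 0 < p) => hp.ne'
  · exact ((continuous_const_rpow hb.ne').comp (by fun_prop : Continuous fun p : ℝ => -p / β))
      |>.continuousOn.mul continuousOn_const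
  · exact hΓ.comp (by fun_prop) fun p (hp : 0 < p) => div_pos hp hβ

lemma negMomentConst_mul_le {b β p t : ℝ} (hb : 0 < b) (hβ : 0 < β) (hp : 0 < p)
    (ht : t ∈ Ioc 0 1) :
    negMomentConst (t * b) β p ≤ negMomentConst b β p * t ^ (-p / β) := by
  have ht1 : 1 ≤ t ^ (-p / β) :=
    one_le_rpow_of_pos_of_le_one_of_nonpos ht.1 ht.2 (div_nonpos_of_nonpos_of_nonneg
      (by linarith) hβ.le)
  have : 0 < p / β := div_pos hp hβ
  have hrest : 0 ≤ b ^ (-p / β) * (1 / β) * Gamma (p / β) := by positivity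
  unfold negMomentConst
  rw [mul_rpow ht.1.le hb.le, div_mul_eq_mul_div]
  gcongr
  nlinarith [one_div_pos.2 hp]

theorem stmt7_general {Ω : Type*} [MeasurableSpace Ω] (P : Measure Ω) [IsProbabilityMeasure P]
    (S : ℝ → Ω → ℝ) (hS : ∀ t, Measurable (S t))
    (hpos : ∀ t, 0 < t → ∀ᵐ ω ∂P, 0 < S t ω)
    (φ : ℝ → ℝ) (α C : ℝ) (hα : α ∈ Ioo (0:ℝ) 2) (hC : 0 < C)
    (hlap : ∀ t, 0 ≤ t → ∀ lam, 0 ≤ lam →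
      ∫ ω, Real.exp (-lam * S t ω) ∂P = Real.exp (-t * φ lam))
    (hφ : ∀ lam, 1 ≤ lam → C * lam ^ (α / 2) ≤ φ lam) :
    ∀ a b : ℝ, 0 < a → a ≤ b → b < 1 →
      ∃ C' > (0:ℝ), ∀ p ∈ Icc a b, ∀ t ∈ Ioc (0:ℝ) 1,
        ∫⁻ ω, ENNReal.ofReal ((S t ω) ^ (-p)) ∂P
          ≤ ENNReal.ofReal (C' * t ^ (-(2 * p) / α)) := by
  intro a b ha hab _
  have hβ : 0 < α / 2 := half_pos hα.1
  obtain ⟨p₀, hp₀, hmax⟩ := isCompact_Icc.exists_isMaxOn (nonempty_Icc.2 hab)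
    ((continuousOn_negMomentConst hC hβ).mono fun p hp => ha.trans_le hp.1)
  refine ⟨negMomentConst C (α / 2) p₀, negMomentConst_pos hC hβ (ha.trans_le hp₀.1),
    fun p hp t ht => ?_⟩
  have hp0 : 0 < p := ha.trans_le hp.1
  have hdecay : ∀ l, 1 ≤ l → ∫ ω, exp (-l * S t ω) ∂P ≤ exp (-(t * C) * l ^ (α / 2)) :=
    fun l hl => by
      rw [hlap t ht.1.le l (by linarith)]
      exact exp_le_exp.2 (by nlinarith [hφ l hl, ht.1])
  calc ∫⁻ ω, ENNReal.ofReal (S t ω ^ (-p)) ∂P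
      ≤ ENNReal.ofReal (negMomentConst (t * C) (α / 2) p) :=
        lintegral_rpow_neg_le_negMomentConst P (hS t) (hpos t ht.1) (mul_pos ht.1 hC) hβ hp0
          hdecay
    _ ≤ ENNReal.ofReal (negMomentConst C (α / 2) p₀ * t ^ (-(2 * p) / α)) := by
        rw [show -(2 * p) / α = -p / (α / 2) by ring]
        exact ENNReal.ofReal_le_ofReal ((negMomentConst_mul_le hC hβ hp0 ht).trans
          (mul_le_mul_of_nonneg_right (hmax hp) (rpow_nonneg ht.1.le _)))

/-- Estimate (4.4): if `S` is a subordinator with Laplace exponent `φ` satisfying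
`φ(λ) ≥ C λ^{α/2}` for `λ ≥ 1`, `α ∈ (0,2)`, then for every `p ∈ (0,1)` (uniformly in
`p` on compact subsets `[a,b] ⊂ (0,1)`) there is `C' > 0` with
`E[S_t^{-p}] ≤ C' t^{-2p/α}` for all `t ∈ (0,1]`. -/
theorem stmt7 {Ω : Type*} [MeasurableSpace Ω] (P : Measure Ω) [IsProbabilityMeasure P]
    (S : ℝ → Ω → ℝ) (hS : ∀ t, Measurable (S t))
    (hpos : ∀ t, 0 < t → ∀ᵐ ω ∂P, 0 < S t ω)
    (φ : ℝ → ℝ) (α C : ℝ) (hα : α ∈ Ioo (0:ℝ) 2) (hC : 0 < C)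
    (hlap : ∀ t, 0 ≤ t → ∀ lam, 0 ≤ lam →
      ∫ ω, Real.exp (-lam * S t ω) ∂P = Real.exp (-t * φ lam))
    (hφ : ∀ lam, 1 ≤ lam → C * lam ^ (α / 2) ≤ φ lam)
    (hφ0 : ∀ lam, 0 ≤ lam → 0 ≤ φ lam) :
    ∀ a b : ℝ, 0 < a → a ≤ b → b < 1 →
      ∃ C' > (0:ℝ), ∀ p ∈ Icc a b, ∀ t ∈ Ioc (0:ℝ) 1,
        ∫⁻ ω, ENNReal.ofReal ((S t ω) ^ (-p)) ∂P
          ≤ ENNReal.ofReal (C' * t ^ (-(2 * p) / α)) :=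
  stmt7_general P S hS hpos φ α C hα hC hlap hφ
end

section
/- Let Φ_s(x) = x + u_s(x) with ‖∇u_s‖_∞ ≤ 1/2 and [∇u_s]_γ ≤ 1/2 uniformly in s, γ ∈ (0,1), and define g_s(y,z) := Φ_s(Φ_s^{-1}(y) + z) − y. Then there is a constant C₀ = C₀(d,γ) such that for all s, y, z: ‖∇_y g_s(·,z)‖_∞ ≤ C₀ (1 ∧ |z|^γ) and |g_s(y,z)| ≤ (3/2)|z|. -/
/-! A `K`-Lipschitz `v` with `K < 1` makes `Φ = id + v` a bijection (Banach fixed point) with a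
`(1 - K)⁻¹`-Lipschitz inverse. Writing `a = Φ⁻¹ y`, the increment is
`Φ(a + z) - y = z + v (a + z) - v a`, of size at most `(1 + K) |z|`, and differentiating
`Φ ∘ Φ⁻¹ = id` gives `∇_y (Φ(Φ⁻¹ y + z) - y) = (∇v(a + z) - ∇v(a)) ∇Φ⁻¹(y)`, whose norm the
Hölder bound on `∇v` and `‖∇Φ⁻¹‖ ≤ (1 - K)⁻¹` control. -/

open Function Set
open scoped NNReal

namespace LipschitzWith

variable {E : Type*} [NormedAddCommGroup E] {v : E → E} {K : ℝ≥0}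

theorem surjective_add_self [CompleteSpace E] (hv : LipschitzWith K v) (hK : K < 1) :
    Surjective fun x => x + v x := by
  intro w
  have hc : ContractingWith K fun x => w - v x :=
    ⟨hK, fun a b => by simpa only [edist_sub_left] using hv a b⟩
  exact ⟨hc.fixedPoint, eq_sub_iff_add_eq.mp hc.fixedPoint_isFixedPt.symm⟩

theorem antilipschitzWith_add_self (hv : LipschitzWith K v) (hK : K < 1) :
    AntilipschitzWith (1 - K)⁻¹ fun x => x + v x := by
  simpa using AntilipschitzWith.id.add_lipschitzWith hv (by simpa using hK)

theorem lipschitzWith_invFun_add_self [CompleteSpace E] (hv : LipschitzWith K v) (hK : K < 1) :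
    LipschitzWith (1 - K)⁻¹ (invFun fun x => x + v x) :=
  (hv.antilipschitzWith_add_self hK).to_rightInverse
    (rightInverse_invFun (hv.surjective_add_self hK))

theorem norm_add_self_comp_invFun_add_sub_le [CompleteSpace E] (hv : LipschitzWith K v)
    (hK : K < 1) (y z : E) :
    ‖(invFun (fun x => x + v x) y + z) + v (invFun (fun x => x + v x) y + z) - y‖
      ≤ (1 + K) * ‖z‖ := by
  set x := invFun (fun x => x + v x) y
  have hx : x + v x = y := rightInverse_invFun (hv.surjective_add_self hK) y
  calc ‖(x + z) + v (x + z) - y‖ = ‖z + (v (x + z) - v x)‖ := by rw [← hx]; congr 1; abel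
    _ ≤ ‖z‖ + K * ‖x + z - x‖ := norm_add_le_of_le le_rfl (hv.norm_sub_le _ _)
    _ = (1 + K) * ‖z‖ := by rw [add_sub_cancel_left]; ring

variable [NormedSpace ℝ E] [CompleteSpace E]

theorem hasFDerivAt_invFun_add_self (hd : Differentiable ℝ v) (hv : LipschitzWith K v)
    (hK : K < 1) (y : E) :
    ∃ L : E →L[ℝ] E, HasFDerivAt (invFun fun x => x + v x) L y ∧
      (ContinuousLinearMap.id ℝ E + fderiv ℝ v (invFun (fun x => x + v x) y)).comp L =
        ContinuousLinearMap.id ℝ E := by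
  set a := invFun (fun x => x + v x) y
  have hnorm : ‖-fderiv ℝ v a‖ < 1 := by
    rw [norm_neg]; exact (norm_fderiv_le_of_lipschitz ℝ hv).trans_lt hK
  set Φ' : E ≃L[ℝ] E := ContinuousLinearEquiv.unitsEquiv ℝ E (Units.oneSub _ hnorm)
  have hΦ' : (Φ' : E →L[ℝ] E) = ContinuousLinearMap.id ℝ E + fderiv ℝ v a := by
    ext; simp [Φ', Units.oneSub, sub_neg_eq_add]
  refine ⟨Φ'.symm, HasFDerivAt.of_local_left_inverse
    (hv.lipschitzWith_invFun_add_self hK).continuous.continuousAt ?_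
    (Filter.Eventually.of_forall (rightInverse_invFun (hv.surjective_add_self hK))), ?_⟩
  · rw [hΦ']; exact (hasFDerivAt_id a).add (hd a).hasFDerivAt
  · rw [← hΦ']; exact Φ'.coe_comp_coe_symm

theorem norm_fderiv_add_self_comp_invFun_add_sub_le (hd : Differentiable ℝ v)
    (hv : LipschitzWith K v) (hK : K < 1) (y z : E) :
    ‖fderiv ℝ (fun y' => (invFun (fun x => x + v x) y' + z)
        + v (invFun (fun x => x + v x) y' + z) - y') y‖
      ≤ (1 - K)⁻¹ * ‖fderiv ℝ v (invFun (fun x => x + v x) y + z)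
        - fderiv ℝ v (invFun (fun x => x + v x) y)‖ := by
  obtain ⟨L, hL, hLinv⟩ := hasFDerivAt_invFun_add_self hd hv hK y
  set a := invFun (fun x => x + v x) y
  have hderiv : HasFDerivAt (fun y' => (invFun (fun x => x + v x) y' + z)
      + v (invFun (fun x => x + v x) y' + z) - y')
      ((fderiv ℝ v (a + z) - fderiv ℝ v a).comp L) y := by
    refine ((((hasFDerivAt_id _).add (hd (a + z)).hasFDerivAt).comp y
      (hL.add_const z)).sub (hasFDerivAt_id y)).congr_fderiv ?_
    -- replace the subtracted identity by `(I + Dv a) L`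
    nth_rw 2 [← hLinv]
    rw [← ContinuousLinearMap.sub_comp, add_sub_add_left_eq_sub]
  have hL_norm : ‖L‖ ≤ (1 - K)⁻¹ :=
    hL.fderiv ▸ norm_fderiv_le_of_lipschitz ℝ (hv.lipschitzWith_invFun_add_self hK)
  rw [hderiv.fderiv, mul_comm]
  exact (ContinuousLinearMap.opNorm_comp_le _ _).trans (by gcongr)

end LipschitzWith

theorem norm_sub_le_two_mul_min_one_rpow {E F : Type*} [SeminormedAddCommGroup E]
    [SeminormedAddCommGroup F] {A : E → F} {c γ : ℝ} (hbound : ∀ x, ‖A x‖ ≤ c)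
    (hhold : ∀ x y, ‖A x - A y‖ ≤ c * ‖x - y‖ ^ γ) (x z : E) :
    ‖A (x + z) - A x‖ ≤ 2 * c * min 1 (‖z‖ ^ γ) := by
  have hc : 0 ≤ c := (norm_nonneg _).trans (hbound x)
  rw [mul_min_of_nonneg _ _ (by positivity), mul_one]
  refine le_min ?_ ?_
  · linarith [norm_sub_le (A (x + z)) (A x), hbound (x + z), hbound x]
  · calc ‖A (x + z) - A x‖ ≤ c * ‖z‖ ^ γ := by simpa using hhold (x + z) x
      _ ≤ 2 * c * ‖z‖ ^ γ := by have := Real.rpow_nonneg (norm_nonneg z) γ; nlinarith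

theorem stmt13_general (d : ℕ) (γ : ℝ)
    (u : ℝ → EuclideanSpace ℝ (Fin d) → EuclideanSpace ℝ (Fin d))
    (hu : ∀ s, ContDiff ℝ 1 (u s))
    (hgrad : ∀ s x, ‖fderiv ℝ (u s) x‖ ≤ 1 / 2)
    (hhold : ∀ s x y, ‖fderiv ℝ (u s) x - fderiv ℝ (u s) y‖ ≤ (1 / 2) * ‖x - y‖ ^ γ) :
    ∃ C₀ > (0:ℝ), ∀ (s : ℝ) (y z : EuclideanSpace ℝ (Fin d)),
      ‖fderiv ℝ (fun y' =>
          ((Function.invFun (fun x => x + u s x) y' + z)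
            + u s (Function.invFun (fun x => x + u s x) y' + z)) - y') y‖
        ≤ C₀ * min 1 (‖z‖ ^ γ) ∧
      ‖((Function.invFun (fun x => x + u s x) y + z)
          + u s (Function.invFun (fun x => x + u s x) y + z)) - y‖
        ≤ (3 / 2) * ‖z‖ := by
  refine ⟨2, two_pos, fun s y z => ?_⟩
  have hd : Differentiable ℝ (u s) := (hu s).differentiable one_ne_zero
  have hv : LipschitzWith (1 / 2) (u s) :=
    lipschitzWith_of_nnnorm_fderiv_le hd fun x => by simpa [← NNReal.coe_le_coe] using hgrad s x
  have hK : (1 / 2 : ℝ≥0) < 1 := by norm_num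
  constructor
  · calc _ ≤ _ := hv.norm_fderiv_add_self_comp_invFun_add_sub_le hd hK y z
      _ ≤ (((1 - 1 / 2)⁻¹ : ℝ≥0) : ℝ) * (2 * (1 / 2) * min 1 (‖z‖ ^ γ)) := by
        gcongr; exact norm_sub_le_two_mul_min_one_rpow (hgrad s) (hhold s) _ z
      _ = 2 * min 1 (‖z‖ ^ γ) := by norm_num
  · calc _ ≤ _ := hv.norm_add_self_comp_invFun_add_sub_le hK y z
      _ = (3 / 2) * ‖z‖ := by norm_num

/-- Lemma 3.2 / estimate (3.10): with `Φ_s(x) = x + u_s(x)`, `‖∇u_s‖_∞ ≤ 1/2`,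
`[∇u_s]_γ ≤ 1/2` uniformly in `s`, and `g_s(y,z) := Φ_s(Φ_s⁻¹(y) + z) − y`,
there is `C₀ = C₀(d,γ)` with `‖∇_y g_s(·,z)‖_∞ ≤ C₀ (1 ∧ |z|^γ)` and
`|g_s(y,z)| ≤ (3/2)|z|`. -/
theorem stmt13 (d : ℕ) (hd : 1 ≤ d) (γ : ℝ) (hγ : γ ∈ Ioo (0:ℝ) 1)
    (u : ℝ → EuclideanSpace ℝ (Fin d) → EuclideanSpace ℝ (Fin d))
    (hu : ∀ s, ContDiff ℝ 1 (u s))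
    (hgrad : ∀ s x, ‖fderiv ℝ (u s) x‖ ≤ 1 / 2)
    (hhold : ∀ s x y, ‖fderiv ℝ (u s) x - fderiv ℝ (u s) y‖ ≤ (1 / 2) * ‖x - y‖ ^ γ) :
    ∃ C₀ > (0:ℝ), ∀ (s : ℝ) (y z : EuclideanSpace ℝ (Fin d)),
      ‖fderiv ℝ (fun y' =>
          ((Function.invFun (fun x => x + u s x) y' + z)
            + u s (Function.invFun (fun x => x + u s x) y' + z)) - y') y‖
        ≤ C₀ * min 1 (‖z‖ ^ γ) ∧
      ‖((Function.invFun (fun x => x + u s x) y + z)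
          + u s (Function.invFun (fun x => x + u s x) y + z)) - y‖
        ≤ (3 / 2) * ‖z‖ :=
  stmt13_general d γ u hu hgrad hhold
end

section
/- In the setting of the previous statement, for any γ₁, γ₂ ≥ 0 with γ₁ + γ₂ = γ ∈ (0,1), there is a constant C₁ = C₁(d,γ₁,γ₂) such that ‖∇_y g_s(·,z)‖_{γ₁} ≤ C₁ (1 ∧ |z|^{γ₂}) for all s and z, where ‖h‖_{γ₁} = ‖h‖_∞ + [h]_{γ₁}. The proof interpolates: [∇g_s(·,z)]_{γ₁} ≤ (2‖∇g_s(·,z)‖_∞)^{γ₂/γ} [∇g_s(·,z)]_γ^{γ₁/γ}. -/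
/-!
Write `Φ = id + f` with `‖Df‖ ≤ 1/2`. Then `f` is `1/2`-Lipschitz, so `Φ` is a bijection with
`2`-Lipschitz inverse, and `DΦ(x) = 1 + Df(x)` is invertible with `‖DΦ(x)⁻¹‖ ≤ 2`. For
`x = Φ⁻¹ y` the derivative of `g(·, z)` at `y` is `(Df(x + z) - Df(x)) DΦ(x)⁻¹`, which gives
`‖∇g(·, z)‖_∞ ≤ 2 (1 ∧ |z|^γ)` and `[∇g(·, z)]_γ ≤ 8`. Interpolating between these two bounds with
weights `γ₂/γ` and `γ₁/γ` gives the `γ₁`-Hölder bound `8 (1 ∧ |z|^γ₂)`.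
-/

open Set Function
open scoped NNReal Ring

section LipschitzPerturbation

variable {E : Type*} [NormedAddCommGroup E] {f : E → E} {K : ℝ≥0}

theorem LipschitzWith.antilipschitzWith_add_self_s14 (hf : LipschitzWith K f) (hK : K < 1) :
    AntilipschitzWith (1 - K)⁻¹ (fun x => x + f x) := by
  simpa using AntilipschitzWith.id.add_lipschitzWith hf (by simpa using hK)

theorem LipschitzWith.surjective_add_self_s14 [CompleteSpace E] (hf : LipschitzWith K f)
    (hK : K < 1) : Surjective (fun x => x + f x) := by
  intro y
  have hc : ContractingWith K (fun x => y - f x) :=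
    ⟨hK, by simpa using (LipschitzWith.const y).sub hf⟩
  exact ⟨hc.fixedPoint _, eq_sub_iff_add_eq.mp hc.fixedPoint_isFixedPt.symm⟩

theorem LipschitzWith.lipschitzWith_invFun_add_self_s14 [CompleteSpace E] (hf : LipschitzWith K f)
    (hK : K < 1) : LipschitzWith (1 - K)⁻¹ (invFun fun x => x + f x) :=
  (hf.antilipschitzWith_add_self_s14 hK).to_rightInverse
    (rightInverse_invFun (hf.surjective_add_self_s14 hK))

end LipschitzPerturbation

section NormedRing

variable {R : Type*} [NormedRing R] [HasSummableGeomSeries R]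

theorem isUnit_one_add_of_norm_lt_one {a : R} (ha : ‖a‖ < 1) : IsUnit (1 + a) := by
  simpa using isUnit_one_sub_of_norm_lt_one (x := -a) (by simpa using ha)

theorem norm_ring_inverse_one_add_le (h1 : ‖(1 : R)‖ ≤ 1) {a : R} (ha : ‖a‖ < 1) :
    ‖(1 + a)⁻¹ʳ‖ ≤ (1 - ‖a‖)⁻¹ := by
  have ha' : ‖-a‖ < 1 := by simpa using ha
  have := tsum_geometric_le_of_norm_lt_one (-a) ha'
  rw [geom_series_eq_inverse _ ha', sub_neg_eq_add, norm_neg] at this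
  linarith

theorem norm_ring_inverse_one_add_le_two (h1 : ‖(1 : R)‖ ≤ 1) {a : R} (ha : ‖a‖ ≤ 1 / 2) :
    ‖(1 + a)⁻¹ʳ‖ ≤ 2 := by
  have := norm_ring_inverse_one_add_le h1 (ha.trans_lt (by norm_num))
  have h2 : (1 - ‖a‖)⁻¹ ≤ 2 := by
    rw [inv_le_comm₀ (by linarith) two_pos]; linarith
  linarith

variable {E : Type*} [SeminormedAddCommGroup E]

/-- With `A = Df` and `Φ = id + f`, `shiftDeriv A z x = DΦ(x + z) DΦ(x)⁻¹ - 1` is the derivative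
of `y ↦ Φ (Φ⁻¹ y + z) - y` at `y = Φ x`. -/
noncomputable def shiftDeriv (A : E → R) (z x : E) : R :=
  (A (x + z) - A x) * (1 + A x)⁻¹ʳ

variable {A : E → R} {γ : ℝ}

theorem norm_shiftDeriv_le (h1 : ‖(1 : R)‖ ≤ 1) (hA : ∀ x, ‖A x‖ ≤ 1 / 2)
    (hAγ : ∀ x y, ‖A x - A y‖ ≤ 1 / 2 * ‖x - y‖ ^ γ) (z x : E) :
    ‖shiftDeriv A z x‖ ≤ 2 * min 1 (‖z‖ ^ γ) := by
  have hΔ : ‖A (x + z) - A x‖ ≤ min 1 (‖z‖ ^ γ) := by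
    refine le_min (by linarith [norm_sub_le (A (x + z)) (A x), hA (x + z), hA x]) ?_
    have := hAγ (x + z) x
    rw [add_sub_cancel_left] at this
    linarith [Real.rpow_nonneg (norm_nonneg z) γ]
  calc ‖shiftDeriv A z x‖ ≤ ‖A (x + z) - A x‖ * ‖(1 + A x)⁻¹ʳ‖ := norm_mul_le _ _
    _ ≤ min 1 (‖z‖ ^ γ) * 2 :=
      mul_le_mul hΔ (norm_ring_inverse_one_add_le_two h1 (hA x)) (norm_nonneg _)
        (le_min zero_le_one (Real.rpow_nonneg (norm_nonneg z) γ))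
    _ = 2 * min 1 (‖z‖ ^ γ) := mul_comm _ _

theorem norm_shiftDeriv_sub_le (h1 : ‖(1 : R)‖ ≤ 1) (hA : ∀ x, ‖A x‖ ≤ 1 / 2)
    (hAγ : ∀ x y, ‖A x - A y‖ ≤ 1 / 2 * ‖x - y‖ ^ γ) (z x x' : E) :
    ‖shiftDeriv A z x - shiftDeriv A z x'‖ ≤ 4 * ‖x - x'‖ ^ γ := by
  have hunit : ∀ x, IsUnit (1 + A x) :=
    fun x => isUnit_one_add_of_norm_lt_one ((hA x).trans_lt one_half_lt_one)
  set V := (1 + A x)⁻¹ʳ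
  set V' := (1 + A x')⁻¹ʳ
  set Δ := A (x + z) - A x
  set Δ' := A (x' + z) - A x'
  have hV : ‖V‖ ≤ 2 := norm_ring_inverse_one_add_le_two h1 (hA x)
  have hV' : ‖V'‖ ≤ 2 := norm_ring_inverse_one_add_le_two h1 (hA x')
  have hΔ' : ‖Δ'‖ ≤ 1 := by linarith [norm_sub_le (A (x' + z)) (A x'), hA (x' + z), hA x']
  have hΔΔ' : ‖Δ - Δ'‖ ≤ ‖x - x'‖ ^ γ := by
    have hsplit : Δ - Δ' = (A (x + z) - A (x' + z)) - (A x - A x') := by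
      simp only [Δ, Δ']; abel
    have hz := hAγ (x + z) (x' + z)
    rw [add_sub_add_right_eq_sub] at hz
    rw [hsplit]
    linarith [norm_sub_le (A (x + z) - A (x' + z)) (A x - A x'), hAγ x x']
  have hVV' : ‖V - V'‖ ≤ 2 * ‖x - x'‖ ^ γ := by
    have hdiff : V - V' = V * (A x' - A x) * V' := by
      rw [Ring.inverse_sub_inverse (iff_of_true (hunit x) (hunit x')), add_sub_add_left_eq_sub]
    calc ‖V - V'‖ ≤ ‖V‖ * ‖A x' - A x‖ * ‖V'‖ := hdiff ▸ norm_mul₃_le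
      _ ≤ 2 * (1 / 2 * ‖x - x'‖ ^ γ) * 2 := by
        gcongr
        exact norm_sub_rev x x' ▸ hAγ x' x
      _ = 2 * ‖x - x'‖ ^ γ := by ring
  calc ‖shiftDeriv A z x - shiftDeriv A z x'‖ = ‖(Δ - Δ') * V + Δ' * (V - V')‖ := by
        simp only [shiftDeriv, Δ, Δ', V, V']; noncomm_ring
    _ ≤ ‖Δ - Δ'‖ * ‖V‖ + ‖Δ'‖ * ‖V - V'‖ :=
      (norm_add_le _ _).trans (add_le_add (norm_mul_le _ _) (norm_mul_le _ _))
    _ ≤ ‖x - x'‖ ^ γ * 2 + 1 * (2 * ‖x - x'‖ ^ γ) := by gcongr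
    _ = 4 * ‖x - x'‖ ^ γ := by ring

end NormedRing

section Calculus

variable {E : Type*} [NormedAddCommGroup E] [NormedSpace ℝ E] {f : E → E}

theorem lipschitzWith_half_of_norm_fderiv_le (hf : Differentiable ℝ f)
    (hf' : ∀ x, ‖fderiv ℝ f x‖ ≤ 1 / 2) : LipschitzWith (1 / 2) f :=
  lipschitzWith_of_nnnorm_fderiv_le hf fun x => by
    rw [← NNReal.coe_le_coe]; simpa using hf' x

theorem isUnit_one_add_fderiv [CompleteSpace E] (hf' : ∀ x, ‖fderiv ℝ f x‖ ≤ 1 / 2) (x : E) :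
    IsUnit (1 + fderiv ℝ f x) :=
  isUnit_one_add_of_norm_lt_one ((hf' x).trans_lt one_half_lt_one)

theorem hasFDerivAt_invFun_add_self [CompleteSpace E] (hf : Differentiable ℝ f)
    (hf' : ∀ x, ‖fderiv ℝ f x‖ ≤ 1 / 2) (y : E) :
    HasFDerivAt (invFun fun x => x + f x) (1 + fderiv ℝ f (invFun (fun x => x + f x) y))⁻¹ʳ y := by
  have hlip := lipschitzWith_half_of_norm_fderiv_le hf hf'
  set x := invFun (fun x => x + f x) y
  let e := ContinuousLinearEquiv.unitsEquiv ℝ E (isUnit_one_add_fderiv hf' x).unit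
  have hΦ : HasFDerivAt (fun x => x + f x) (e : E →L[ℝ] E) x :=
    (hasFDerivAt_id x).add (hf x).hasFDerivAt
  have h := hΦ.of_local_left_inverse
    (hlip.lipschitzWith_invFun_add_self_s14 (by norm_num)).continuous.continuousAt
    (Filter.Eventually.of_forall (rightInverse_invFun (hlip.surjective_add_self_s14 (by norm_num))))
  rwa [← (isUnit_one_add_fderiv hf' x).unit_spec, Ring.inverse_unit]

theorem fderiv_add_self_comp_invFun_add_sub [CompleteSpace E] (hf : Differentiable ℝ f)
    (hf' : ∀ x, ‖fderiv ℝ f x‖ ≤ 1 / 2) (z y : E) :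
    fderiv ℝ (fun w => ((invFun (fun x => x + f x) w + z)
        + f (invFun (fun x => x + f x) w + z)) - w) y
      = shiftDeriv (fderiv ℝ f) z (invFun (fun x => x + f x) y) := by
  set x := invFun (fun x => x + f x) y
  have hΦ : HasFDerivAt (fun x => x + f x) (1 + fderiv ℝ f (x + z)) (x + z) :=
    (hasFDerivAt_id _).add (hf _).hasFDerivAt
  have hg := (hΦ.comp y ((hasFDerivAt_invFun_add_self hf hf' y).add_const z)).sub
    (hasFDerivAt_id y)
  have hinv : (1 + fderiv ℝ f x) * (1 + fderiv ℝ f x)⁻¹ʳ = 1 :=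
    Ring.mul_inverse_cancel _ (isUnit_one_add_fderiv hf' x)
  refine hg.fderiv.trans ?_
  change (1 + fderiv ℝ f (x + z)) * (1 + fderiv ℝ f x)⁻¹ʳ - 1 = shiftDeriv _ _ _
  calc (1 + fderiv ℝ f (x + z)) * (1 + fderiv ℝ f x)⁻¹ʳ - 1
      = shiftDeriv (fderiv ℝ f) z x + ((1 + fderiv ℝ f x) * (1 + fderiv ℝ f x)⁻¹ʳ - 1) := by
        rw [shiftDeriv]; noncomm_ring
    _ = shiftDeriv (fderiv ℝ f) z x := by rw [hinv, sub_self, add_zero]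

theorem norm_shiftDeriv_fderiv_invFun_sub_le [CompleteSpace E] {γ : ℝ}
    (hf : Differentiable ℝ f) (hf' : ∀ x, ‖fderiv ℝ f x‖ ≤ 1 / 2) (hγ₀ : 0 ≤ γ) (hγ₁ : γ ≤ 1)
    (hfγ : ∀ x y, ‖fderiv ℝ f x - fderiv ℝ f y‖ ≤ 1 / 2 * ‖x - y‖ ^ γ) (z y y' : E) :
    ‖shiftDeriv (fderiv ℝ f) z (invFun (fun x => x + f x) y)
      - shiftDeriv (fderiv ℝ f) z (invFun (fun x => x + f x) y')‖ ≤ 8 * ‖y - y'‖ ^ γ := by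
  have hinv := (lipschitzWith_half_of_norm_fderiv_le hf hf').lipschitzWith_invFun_add_self_s14
    (by norm_num)
  have hx : ‖invFun (fun x => x + f x) y - invFun (fun x => x + f x) y'‖ ≤ 2 * ‖y - y'‖ := by
    have h := hinv.dist_le_mul y y'
    norm_num [dist_eq_norm] at h
    exact h
  have h2γ : (2 : ℝ) ^ γ ≤ 2 := by
    simpa using Real.rpow_le_rpow_of_exponent_le one_le_two hγ₁
  calc _ ≤ 4 * ‖invFun (fun x => x + f x) y - invFun (fun x => x + f x) y'‖ ^ γ :=
        norm_shiftDeriv_sub_le ContinuousLinearMap.norm_id_le hf' hfγ z _ _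
    _ ≤ 4 * (2 * ‖y - y'‖) ^ γ := by gcongr
    _ = 4 * 2 ^ γ * ‖y - y'‖ ^ γ := by rw [Real.mul_rpow zero_le_two (norm_nonneg _)]; ring
    _ ≤ 8 * ‖y - y'‖ ^ γ := by nlinarith [Real.rpow_nonneg (norm_nonneg (y - y')) γ]

end Calculus

theorem le_mul_rpow_mul_rpow_of_le_of_le {c K a b θ : ℝ} (hc : 0 ≤ c) (hK : 0 ≤ K)
    (ha : 0 ≤ a) (hb : 0 ≤ b) (hθ₀ : 0 ≤ θ) (hθ₁ : θ ≤ 1) (hca : c ≤ K * a) (hcb : c ≤ K * b) :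
    c ≤ K * (a ^ θ * b ^ (1 - θ)) := by
  have hsum : θ + (1 - θ) ≠ 0 := by norm_num
  calc c = c ^ θ * c ^ (1 - θ) := by rw [← Real.rpow_add' hc hsum, add_sub_cancel, Real.rpow_one]
    _ ≤ (K * a) ^ θ * (K * b) ^ (1 - θ) := by gcongr
    _ = K ^ θ * K ^ (1 - θ) * (a ^ θ * b ^ (1 - θ)) := by
      rw [Real.mul_rpow hK ha, Real.mul_rpow hK hb]; ring
    _ = K * (a ^ θ * b ^ (1 - θ)) := by
      rw [← Real.rpow_add' hK hsum, add_sub_cancel, Real.rpow_one]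

theorem min_one_rpow {t θ : ℝ} (ht : 0 ≤ t) (hθ : 0 ≤ θ) : min 1 t ^ θ = min 1 (t ^ θ) := by
  rcases le_total 1 t with h | h
  · rw [min_eq_left h, Real.one_rpow, min_eq_left (Real.one_le_rpow h hθ)]
  · rw [min_eq_right h, min_eq_right (Real.rpow_le_one ht h hθ)]

theorem stmt14_general (d : ℕ) (γ γ₁ γ₂ : ℝ) (hγ : γ ∈ Ioo (0:ℝ) 1)
    (hγ₁ : 0 ≤ γ₁) (hγ₂ : 0 ≤ γ₂) (hsum : γ₁ + γ₂ = γ)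
    (u : ℝ → EuclideanSpace ℝ (Fin d) → EuclideanSpace ℝ (Fin d))
    (hu : ∀ s, ContDiff ℝ 1 (u s))
    (hgrad : ∀ s x, ‖fderiv ℝ (u s) x‖ ≤ 1 / 2)
    (hhold : ∀ s x y, ‖fderiv ℝ (u s) x - fderiv ℝ (u s) y‖ ≤ (1 / 2) * ‖x - y‖ ^ γ) :
    ∃ C₁ > (0:ℝ), ∀ (s : ℝ) (z : EuclideanSpace ℝ (Fin d)),
      (∀ y, ‖fderiv ℝ (fun y' =>
          ((Function.invFun (fun x => x + u s x) y' + z)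
            + u s (Function.invFun (fun x => x + u s x) y' + z)) - y') y‖
        ≤ C₁ * min 1 (‖z‖ ^ γ₂)) ∧
      (∀ y y', ‖fderiv ℝ (fun w =>
            ((Function.invFun (fun x => x + u s x) w + z)
              + u s (Function.invFun (fun x => x + u s x) w + z)) - w) y
          - fderiv ℝ (fun w =>
            ((Function.invFun (fun x => x + u s x) w + z)
              + u s (Function.invFun (fun x => x + u s x) w + z)) - w) y'‖
        ≤ C₁ * min 1 (‖z‖ ^ γ₂) * ‖y - y'‖ ^ γ₁) := by
  obtain ⟨hγ_pos, hγ_lt_one⟩ := hγ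
  have hθ₀ : 0 ≤ γ₂ / γ := div_nonneg hγ₂ hγ_pos.le
  have hθ₁ : γ₂ / γ ≤ 1 := (div_le_one hγ_pos).2 (by linarith)
  refine ⟨8, by norm_num, fun s z => ?_⟩
  have hf := (hu s).differentiable one_ne_zero
  simp only [fderiv_add_self_comp_invFun_add_sub hf (hgrad s) z]
  set m := min 1 (‖z‖ ^ γ)
  have hm₀ : 0 ≤ m := le_min zero_le_one (by positivity)
  have hmθ : m ^ (γ₂ / γ) = min 1 (‖z‖ ^ γ₂) := by
    rw [min_one_rpow (by positivity) hθ₀, ← Real.rpow_mul (norm_nonneg z),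
      mul_div_cancel₀ _ hγ_pos.ne']
  have hm : m ≤ m ^ (γ₂ / γ) := Real.self_le_rpow_of_le_one hm₀ (min_le_left _ _) hθ₁
  set D := shiftDeriv (fderiv ℝ (u s)) z
  set Ψ := invFun fun x => x + u s x
  have hsup : ∀ x, ‖D x‖ ≤ 2 * m :=
    norm_shiftDeriv_le ContinuousLinearMap.norm_id_le (hgrad s) (hhold s) z
  refine ⟨fun y => by linarith [hsup (Ψ y)], fun y y' => ?_⟩
  have hsup' : ‖D (Ψ y) - D (Ψ y')‖ ≤ 8 * m := by
    linarith [norm_sub_le (D (Ψ y)) (D (Ψ y')), hsup (Ψ y), hsup (Ψ y')]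
  calc _ ≤ 8 * (m ^ (γ₂ / γ) * (‖y - y'‖ ^ γ) ^ (1 - γ₂ / γ)) :=
        le_mul_rpow_mul_rpow_of_le_of_le (norm_nonneg _) (by norm_num) hm₀ (by positivity)
          hθ₀ hθ₁ hsup'
          (norm_shiftDeriv_fderiv_invFun_sub_le hf (hgrad s) hγ_pos.le hγ_lt_one.le (hhold s) z y y')
    _ = 8 * min 1 (‖z‖ ^ γ₂) * ‖y - y'‖ ^ γ₁ := by
      rw [hmθ, ← Real.rpow_mul (norm_nonneg _),
        show γ * (1 - γ₂ / γ) = γ₁ by field_simp; linarith]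
      ring

/-- Lemma 3.2 (estimate (3.8)): in the setting of `g_s(y,z) := Φ_s(Φ_s⁻¹(y)+z) − y`,
for any `γ₁, γ₂ ≥ 0` with `γ₁ + γ₂ = γ ∈ (0,1)`, there is `C₁ = C₁(d,γ₁,γ₂)` such that
`‖∇_y g_s(·,z)‖_{γ₁} ≤ C₁ (1 ∧ |z|^{γ₂})`, i.e. both the sup norm and the `γ₁`-Hölder
seminorm of `y ↦ ∇_y g_s(y,z)` are bounded by `C₁ (1 ∧ |z|^{γ₂})`. -/
theorem stmt14 (d : ℕ) (hd : 1 ≤ d) (γ γ₁ γ₂ : ℝ) (hγ : γ ∈ Ioo (0:ℝ) 1)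
    (hγ₁ : 0 ≤ γ₁) (hγ₂ : 0 ≤ γ₂) (hsum : γ₁ + γ₂ = γ)
    (u : ℝ → EuclideanSpace ℝ (Fin d) → EuclideanSpace ℝ (Fin d))
    (hu : ∀ s, ContDiff ℝ 1 (u s))
    (hgrad : ∀ s x, ‖fderiv ℝ (u s) x‖ ≤ 1 / 2)
    (hhold : ∀ s x y, ‖fderiv ℝ (u s) x - fderiv ℝ (u s) y‖ ≤ (1 / 2) * ‖x - y‖ ^ γ) :
    ∃ C₁ > (0:ℝ), ∀ (s : ℝ) (z : EuclideanSpace ℝ (Fin d)),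
      (∀ y, ‖fderiv ℝ (fun y' =>
          ((Function.invFun (fun x => x + u s x) y' + z)
            + u s (Function.invFun (fun x => x + u s x) y' + z)) - y') y‖
        ≤ C₁ * min 1 (‖z‖ ^ γ₂)) ∧
      (∀ y y', ‖fderiv ℝ (fun w =>
            ((Function.invFun (fun x => x + u s x) w + z)
              + u s (Function.invFun (fun x => x + u s x) w + z)) - w) y
          - fderiv ℝ (fun w =>
            ((Function.invFun (fun x => x + u s x) w + z)
              + u s (Function.invFun (fun x => x + u s x) w + z)) - w) y'‖
        ≤ C₁ * min 1 (‖z‖ ^ γ₂) * ‖y - y'‖ ^ γ₁) :=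
  stmt14_general d γ γ₁ γ₂ hγ hγ₁ hγ₂ hsum u hu hgrad hhold
end
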